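/- Let E be an Armendariz A-module. Then E is an annihilator multiplication A-module if and only if the polynomial module E[X] is an annihilator multiplication A[X]-module. -/

import Mathlib

/-- An `A`-module `E` is an *annihilator multiplication module* if for every `e ∈ E`
there exists a finitely generated ideal `I` of `A` such that `ann(e) = ann(IE)`. -/
def IsAnnMultiplication (A : Type*) [CommRing A] (E : Type*) [AddCommGroup E]
    [Module A E] : Prop :=
  ∀ e : E, ∃ I : Ideal A, I.FG ∧
    (Submodule.span A {e}).annihilator = (I • (⊤ : Submodule A E)).annihilator

/-- `E` is an *Armendariz module* if whenever `f(X) • e(X) = 0` in the polynomial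
module `E[X]`, all products of coefficients `fᵢ • eⱼ` vanish. -/
def IsArmendariz (A : Type*) [CommRing A] (E : Type*) [AddCommGroup E]
    [Module A E] : Prop :=
  ∀ (f : Polynomial A) (e : PolynomialModule A E), f • e = 0 →
    ∀ i j : ℕ, f.coeff i • e.coeff j = 0

/-! The `A[X]`-annihilator of `E[X]` is `ann(E)[X]`, so annihilators of modules `J • E[X]` are
controlled coefficientwise: `ann(I[X] E[X]) = ann(I E)[X]`, and a constant `a` kills `J E[X]`
iff it kills `I E`, where `I` is generated by the coefficients of generators of `J`.
For `E ⟹ E[X]`, the Armendariz property gives `ann(e) = ann(e₀, …, eₙ)[X]`, and the annihilator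
multiplication property extends from cyclic to finitely generated submodules because both
`N ↦ ann N` and `I ↦ ann(I E)` turn sums into intersections. For `E[X] ⟹ E`, intersect
`ann(e X⁰) = ann(J E[X])` with the constants. -/

open Polynomial

namespace Submodule

variable {A E : Type*} [CommSemiring A] [AddCommMonoid E] [Module A E]

theorem annihilator_smul_eq_colon (I : Ideal A) (N : Submodule A E) :
    (I • N).annihilator = N.annihilator.colon I := by
  ext a
  simp only [mem_annihilator, mem_colon, SetLike.mem_coe, smul_eq_mul]
  refine ⟨fun h b hb n hn => ?_, fun h x hx => ?_⟩
  · rw [mul_smul]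
    exact h _ (smul_mem_smul hb hn)
  · refine smul_induction_on hx (fun b hb n hn => ?_) (fun x y hx hy => ?_)
    · rw [← mul_smul]
      exact h b hb n hn
    · rw [smul_add, hx, hy, add_zero]

end Submodule

theorem IsAnnMultiplication.exists_fg_annihilator_eq {A E : Type*} [CommRing A] [AddCommGroup E]
    [Module A E] (h : IsAnnMultiplication A E) {N : Submodule A E} (hN : N.FG) :
    ∃ I : Ideal A, I.FG ∧ N.annihilator = (I • (⊤ : Submodule A E)).annihilator := by
  induction N, hN using Submodule.fg_induction with
  | singleton e => exact h e
  | sup N₁ N₂ _ _ ih₁ ih₂ =>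
    obtain ⟨I₁, hI₁, h₁⟩ := ih₁
    obtain ⟨I₂, hI₂, h₂⟩ := ih₂
    refine ⟨I₁ ⊔ I₂, Submodule.FG.sup hI₁ hI₂, ?_⟩
    rw [Submodule.sup_smul, Submodule.annihilator_sup, Submodule.annihilator_sup, h₁, h₂]

namespace PolynomialModule

variable {A E : Type*} [CommRing A] [AddCommGroup E] [Module A E]

theorem smul_eq_zero_of_coeff_smul_coeff_eq_zero {f : A[X]} {e : PolynomialModule A E}
    (h : ∀ i j, f.coeff i • e.coeff j = 0) : f • e = 0 := by
  ext n
  rw [smul_apply, coeff_zero, Finsupp.zero_apply]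
  exact Finset.sum_eq_zero fun x _ => h x.1 x.2

theorem annihilator_eq_map_C :
    Module.annihilator A[X] (PolynomialModule A E) = (Module.annihilator A E).map C := by
  ext f
  simp only [Ideal.mem_map_C_iff, Module.mem_annihilator]
  refine ⟨fun h n x => ?_, fun h e => smul_eq_zero_of_coeff_smul_coeff_eq_zero fun i j => h i _⟩
  simpa using congr($(h (single A 0 x)).coeff n)

theorem annihilator_map_C_smul_top (I : Ideal A) :
    (I.map C • ⊤ : Submodule A[X] (PolynomialModule A E)).annihilator =
      (I • (⊤ : Submodule A E)).annihilator.map C := by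
  ext f
  rw [Ideal.mem_map_C_iff, Submodule.annihilator_smul_eq_colon, Submodule.annihilator_top,
    annihilator_eq_map_C, show I.map C = Ideal.span (C '' I) from rfl, Ideal.colon_span]
  simp only [Submodule.annihilator_smul_eq_colon, Submodule.annihilator_top, Submodule.mem_colon,
    Set.forall_mem_image, Ideal.mem_map_C_iff, smul_eq_mul, coeff_mul_C, SetLike.mem_coe]
  exact ⟨fun h n b hb => h hb n, fun h b hb n => h n b hb⟩

theorem comap_C_annihilator_span_smul_top (S : Set A[X]) :
    (Ideal.span S • ⊤ : Submodule A[X] (PolynomialModule A E)).annihilator.comap C =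
      (Ideal.span (⋃ g ∈ S, Set.range g.coeff) • (⊤ : Submodule A E)).annihilator := by
  ext a
  simp only [Ideal.mem_comap, Submodule.annihilator_smul_eq_colon, Submodule.annihilator_top,
    annihilator_eq_map_C, Ideal.colon_span, Submodule.mem_colon, Ideal.mem_map_C_iff,
    smul_eq_mul, coeff_C_mul, Set.mem_iUnion, Set.mem_range, forall_exists_index]
  exact ⟨fun h b g hg n hb => hb ▸ h g hg n, fun h g hg n => h _ g hg n rfl⟩

theorem comap_C_annihilator_span_single (e : E) :
    (Submodule.span A[X] {single A 0 e}).annihilator.comap C =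
      (Submodule.span A {e}).annihilator := by
  ext a
  rw [Ideal.mem_comap, Submodule.mem_annihilator_span_singleton,
    Submodule.mem_annihilator_span_singleton, ← monomial_zero_left, monomial_smul_single, add_zero,
    ← coeff_inj, coeff_single, coeff_zero, Finsupp.single_eq_zero]

end PolynomialModule

theorem IsArmendariz.annihilator_span_singleton {A E : Type*} [CommRing A] [AddCommGroup E]
    [Module A E] (h : IsArmendariz A E) (e : PolynomialModule A E) :
    (Submodule.span A[X] {e}).annihilator =
      (Submodule.span A (Set.range e.coeff)).annihilator.map C := by
  ext f
  rw [Submodule.mem_annihilator_span_singleton, Ideal.mem_map_C_iff]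
  simp only [Submodule.mem_annihilator_span, Subtype.forall, Set.forall_mem_range]
  exact ⟨h f e, PolynomialModule.smul_eq_zero_of_coeff_smul_coeff_eq_zero⟩

theorem isAnnMultiplication_polynomialModule_iff_general {A : Type*} [CommRing A]
    {E : Type*} [AddCommGroup E] [Module A E]
    (hArm : IsArmendariz A E) :
    IsAnnMultiplication A E ↔
      IsAnnMultiplication (Polynomial A) (PolynomialModule A E) := by
  refine ⟨fun hE e => ?_, fun hEX e => ?_⟩
  · obtain ⟨I, hI, hann⟩ :=
      hE.exists_fg_annihilator_eq (Submodule.fg_span (Finsupp.finite_range e.coeff))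
    refine ⟨I.map C, hI.map C, ?_⟩
    rw [hArm.annihilator_span_singleton, hann, PolynomialModule.annihilator_map_C_smul_top]
  · obtain ⟨_, ⟨G, rfl⟩, hann⟩ := hEX (PolynomialModule.single A 0 e)
    refine ⟨Ideal.span (⋃ g ∈ (G : Set A[X]), Set.range g.coeff),
      Submodule.fg_span (G.finite_toSet.biUnion fun g _ => g.finite_range_coeff), ?_⟩
    rw [← PolynomialModule.comap_C_annihilator_span_single, hann,
      PolynomialModule.comap_C_annihilator_span_smul_top]

/-- An Armendariz module `E` is an annihilator multiplication `A`-module iff the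
polynomial module `E[X]` is an annihilator multiplication `A[X]`-module. -/
theorem isAnnMultiplication_polynomialModule_iff {A : Type*} [CommRing A] [Nontrivial A]
    {E : Type*} [AddCommGroup E] [Module A E] [Nontrivial E]
    (hArm : IsArmendariz A E) :
    IsAnnMultiplication A E ↔
      IsAnnMultiplication (Polynomial A) (PolynomialModule A E) :=
  isAnnMultiplication_polynomialModule_iff_general hArm
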